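/- arXiv:2306.06252 — 4 statements merged into one kernel-verified Lean document; each statement's English description precedes it below -/
import Mathlib

section
/- Fix N ≥ 1. Let P be the pairwise spin-gas joint distribution. Then for every i ∈ {1,…,N} and every (σ, τ), the full conditional of σ_i under P is of Glauber (logistic) form: P(σ_i = ε | σ_{−i}, τ) = exp(ε Γ̄_i(σ_{−i}, τ)) / (2 cosh Γ̄_i(σ_{−i}, τ)) for ε ∈ {−1,+1}, where the effective field is Γ̄_i(σ_{−i}, τ) = h_i + Σ_{j ≠ i} J_{ij} σ_j + Σ_{m=1}^N τ_m ( J̃_{mi} + (c/δt) G¹_{mi} + (c/δt²) G²_{mi} ). -/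
open Real Finset

noncomputable section

/-- Real value of a Boolean spin: `true ↦ 1`, `false ↦ -1`. -/
def spinVal (b : Bool) : ℝ := if b then 1 else -1

/-- Discrete momentum `p_j(σ) = c (σ_j − s_j) / δt`. -/
def mom (N : ℕ) (c δt : ℝ) (s σ : Fin N → Bool) (j : Fin N) : ℝ :=
  c * (spinVal (σ j) - spinVal (s j)) / δt

/-- Discrete acceleration `a_j(σ) = (p_j(σ) − p′_j) / δt`. -/
def acc (N : ℕ) (c δt : ℝ) (s : Fin N → Bool) (p' : Fin N → ℝ) (σ : Fin N → Bool)
    (j : Fin N) : ℝ :=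
  (mom N c δt s σ j - p' j) / δt

/-- Spin-gas effective local field
`Γ_i(σ) = h̃_i + Σ_j J̃_{ij} σ_j + Σ_j G¹_{ij} p_j(σ) + Σ_j G²_{ij} a_j(σ)`. -/
def Gamma (N : ℕ) (c δt : ℝ) (s : Fin N → Bool) (p' : Fin N → ℝ) (htil : Fin N → ℝ)
    (Jtil G1 G2 : Fin N → Fin N → ℝ) (σ : Fin N → Bool) (i : Fin N) : ℝ :=
  htil i + (∑ j, Jtil i j * spinVal (σ j)) + (∑ j, G1 i j * mom N c δt s σ j)
    + ∑ j, G2 i j * acc N c δt s p' σ j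

/-- Energy of the pairwise spin-gas joint distribution:
`Σ_i h_i σ_i + Σ_{i<j} J_{ij} σ_i σ_j + Σ_i τ_i Γ_i(σ)`. -/
def sgEnergy (N : ℕ) (c δt : ℝ) (s : Fin N → Bool) (p' : Fin N → ℝ) (h htil : Fin N → ℝ)
    (J Jtil G1 G2 : Fin N → Fin N → ℝ) (στ : (Fin N → Bool) × (Fin N → Bool)) : ℝ :=
  (∑ i, h i * spinVal (στ.1 i))
    + (∑ i, ∑ j, if i < j then J i j * spinVal (στ.1 i) * spinVal (στ.1 j) else 0)
    + ∑ i, spinVal (στ.2 i) * Gamma N c δt s p' htil Jtil G1 G2 στ.1 i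

/-- The pairwise spin-gas joint distribution
`P(σ,τ) = Z⁻¹ exp(Σ_i h_i σ_i + Σ_{i<j} J_{ij} σ_i σ_j + Σ_i τ_i Γ_i(σ))`. -/
def sgP (N : ℕ) (c δt : ℝ) (s : Fin N → Bool) (p' : Fin N → ℝ) (h htil : Fin N → ℝ)
    (J Jtil G1 G2 : Fin N → Fin N → ℝ) (στ : (Fin N → Bool) × (Fin N → Bool)) : ℝ :=
  Real.exp (sgEnergy N c δt s p' h htil J Jtil G1 G2 στ)
    / ∑ στ' : (Fin N → Bool) × (Fin N → Bool),
        Real.exp (sgEnergy N c δt s p' h htil J Jtil G1 G2 στ')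

/-- Effective field for the time-t spins:
`Γ̄_i(σ_{−i}, τ) = h_i + Σ_{j≠i} J_{ij} σ_j + Σ_m τ_m (J̃_{mi} + (c/δt) G¹_{mi} + (c/δt²) G²_{mi})`. -/
def GammaBar (N : ℕ) (c δt : ℝ) (h : Fin N → ℝ) (J Jtil G1 G2 : Fin N → Fin N → ℝ)
    (σ τ : Fin N → Bool) (i : Fin N) : ℝ :=
  h i + (∑ j ∈ Finset.univ.filter (fun j => j ≠ i), J i j * spinVal (σ j))
    + ∑ m, spinVal (τ m) * (Jtil m i + (c / δt) * G1 m i + (c / δt ^ 2) * G2 m i)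


/-- Difference of two sums that agree except at index `i`. -/
lemma sum_ite_diff {N : ℕ} (i : Fin N) (v x y u : Fin N → ℝ) :
    (∑ j, v j * (if j = i then x j else u j)) - (∑ j, v j * (if j = i then y j else u j))
      = v i * (x i - y i) := by
  rw [← Finset.sum_sub_distrib, Finset.sum_eq_single i]
  · simp [mul_sub]
  · intro j _ hj; simp [hj]
  · intro hi; exact absurd (Finset.mem_univ i) hi

/-- Under the pairwise spin-gas joint distribution, the full conditional of
each time-t spin `σ_i` given all remaining coordinates is of Glauber (logistic) form with
effective field `Γ̄_i(σ_{−i}, τ)`. -/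
theorem sigma_full_conditional_is_glauber
    (N : ℕ) (hN : 1 ≤ N) (c δt : ℝ) (hc : 0 < c) (hδt : 0 < δt)
    (s : Fin N → Bool) (p' : Fin N → ℝ) (h htil : Fin N → ℝ)
    (J Jtil G1 G2 : Fin N → Fin N → ℝ)
    (hJsym : ∀ i j, J i j = J j i) (hJdiag : ∀ i, J i i = 0)
    (hJtsym : ∀ i j, Jtil i j = Jtil j i) (hJtdiag : ∀ i, Jtil i i = 0)
    (i : Fin N) (σ τ : Fin N → Bool) (ε : Bool) :
    sgP N c δt s p' h htil J Jtil G1 G2 (Function.update σ i ε, τ)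
        / (∑ b : Bool, sgP N c δt s p' h htil J Jtil G1 G2 (Function.update σ i b, τ))
      = Real.exp (spinVal ε * GammaBar N c δt h J Jtil G1 G2 σ τ i)
        / (2 * Real.cosh (GammaBar N c δt h J Jtil G1 G2 σ τ i)) := by
  classical
  have hsv : ∀ (b : Bool) (j : Fin N),
      spinVal (Function.update σ i b j) = if j = i then spinVal b else spinVal (σ j) := by
    intro b j; rw [Function.update_apply, apply_ite spinVal]
  have hmom : ∀ (b : Bool) (j : Fin N),
      mom N c δt s (Function.update σ i b) j
        = if j = i then c * (spinVal b - spinVal (s j)) / δt else mom N c δt s σ j := by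
    intro b j; simp only [mom, hsv]; split_ifs <;> rfl
  have hacc : ∀ (b : Bool) (j : Fin N),
      acc N c δt s p' (Function.update σ i b) j
        = if j = i then (c * (spinVal b - spinVal (s j)) / δt - p' j) / δt
          else acc N c δt s p' σ j := by
    intro b j; simp only [acc, hmom]; split_ifs <;> rfl
  have e1 : ∀ m : Fin N,
      (∑ j, Jtil m j * spinVal (Function.update σ i true j))
        - (∑ j, Jtil m j * spinVal (Function.update σ i false j)) = Jtil m i * 2 := by
    intro m; simp only [hsv]; rw [sum_ite_diff]; norm_num [spinVal]
  have e2 : ∀ m : Fin N,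
      (∑ j, G1 m j * mom N c δt s (Function.update σ i true) j)
        - (∑ j, G1 m j * mom N c δt s (Function.update σ i false) j)
        = 2 * (c / δt * G1 m i) := by
    intro m; simp only [hmom]; rw [sum_ite_diff]; simp only [spinVal, if_true]
    norm_num; ring
  have e3 : ∀ m : Fin N,
      (∑ j, G2 m j * acc N c δt s p' (Function.update σ i true) j)
        - (∑ j, G2 m j * acc N c δt s p' (Function.update σ i false) j)
        = 2 * (c / δt ^ 2 * G2 m i) := by
    intro m; simp only [hacc]; rw [sum_ite_diff]; simp only [spinVal, if_true]
    norm_num; ring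
  have hGd : ∀ m : Fin N,
      Gamma N c δt s p' htil Jtil G1 G2 (Function.update σ i true) m
        - Gamma N c δt s p' htil Jtil G1 G2 (Function.update σ i false) m
        = 2 * (Jtil m i + c / δt * G1 m i + c / δt ^ 2 * G2 m i) := by
    intro m
    have h1 := e1 m; have h2 := e2 m; have h3 := e3 m
    simp only [_root_.Gamma]
    linarith [h1, h2, h3]
  have hT :
      (∑ m, spinVal (τ m) * Gamma N c δt s p' htil Jtil G1 G2 (Function.update σ i true) m)
        - (∑ m, spinVal (τ m) * Gamma N c δt s p' htil Jtil G1 G2 (Function.update σ i false) m)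
        = 2 * ∑ m, spinVal (τ m)
            * (Jtil m i + c / δt * G1 m i + c / δt ^ 2 * G2 m i) := by
    rw [← Finset.sum_sub_distrib, Finset.mul_sum]
    refine Finset.sum_congr rfl fun m _ => ?_
    rw [← mul_sub, hGd m]; ring
  have hA :
      (∑ j, h j * spinVal (Function.update σ i true j))
        - (∑ j, h j * spinVal (Function.update σ i false j)) = h i * 2 := by
    simp only [hsv]; rw [sum_ite_diff]; norm_num [spinVal]
  -- pair term
  have hpair : ∀ j k : Fin N,
      ((if j < k then J j k * spinVal (Function.update σ i true j)
          * spinVal (Function.update σ i true k) else 0)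
        - (if j < k then J j k * spinVal (Function.update σ i false j)
          * spinVal (Function.update σ i false k) else 0))
      = (if j = i then (if i < k then 2 * J i k * spinVal (σ k) else 0) else 0)
        + (if k = i then (if j < i then 2 * J j i * spinVal (σ j) else 0) else 0) := by
    intro j k
    have s1 : spinVal true = 1 := rfl
    have s2 : spinVal false = -1 := rfl
    by_cases hj : j = i <;> by_cases hk : k = i
    · rw [hj, hk]; simp
    · rw [hj]
      by_cases hlt : i < k
      · simp [hlt, hk, Function.update_self, Function.update_of_ne hk, s1, s2]; ring
      · simp [hlt, hk]
    · rw [hk]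
      by_cases hlt : j < i
      · simp [hlt, hj, Function.update_self, Function.update_of_ne hj, s1, s2]; ring
      · simp [hlt, hj]
    · simp [Function.update_of_ne hj, Function.update_of_ne hk, hj, hk]
  have hB :
      (∑ j, ∑ k, if j < k then J j k * spinVal (Function.update σ i true j)
          * spinVal (Function.update σ i true k) else 0)
        - (∑ j, ∑ k, if j < k then J j k * spinVal (Function.update σ i false j)
          * spinVal (Function.update σ i false k) else 0)
        = 2 * ∑ j ∈ Finset.univ.filter (fun j => j ≠ i), J i j * spinVal (σ j) := by
    rw [← Finset.sum_sub_distrib]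
    have : ∀ j : Fin N,
        ((∑ k, if j < k then J j k * spinVal (Function.update σ i true j)
            * spinVal (Function.update σ i true k) else 0)
          - ∑ k, if j < k then J j k * spinVal (Function.update σ i false j)
            * spinVal (Function.update σ i false k) else 0)
        = (if j = i then (∑ k, if i < k then 2 * J i k * spinVal (σ k) else 0) else 0)
          + (if j < i then 2 * J j i * spinVal (σ j) else 0) := by
      intro j
      rw [← Finset.sum_sub_distrib]
      have := fun k => hpair j k
      rw [Finset.sum_congr rfl (fun k _ => hpair j k), Finset.sum_add_distrib]
      congr 1
      · split_ifs with hj <;> simp [hj]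
      · rw [Finset.sum_ite_eq' Finset.univ i
          (fun _ => if j < i then 2 * J j i * spinVal (σ j) else 0)]
        simp
    rw [Finset.sum_congr rfl (fun j _ => this j), Finset.sum_add_distrib,
      Finset.sum_ite_eq' Finset.univ i
        (fun _ => ∑ k, if i < k then 2 * J i k * spinVal (σ k) else 0)]
    simp only [Finset.mem_univ, if_true]
    rw [Finset.mul_sum, Finset.sum_filter, ← Finset.sum_add_distrib]
    refine Finset.sum_congr rfl fun j _ => ?_
    rcases lt_trichotomy i j with hij | hij | hij
    · simp [hij, asymm hij, hij.ne']
      ring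
    · simp [← hij]
    · simp [hij, asymm hij, hij.ne, hJsym j i]
      ring
  have key : sgEnergy N c δt s p' h htil J Jtil G1 G2 (Function.update σ i true, τ)
      = sgEnergy N c δt s p' h htil J Jtil G1 G2 (Function.update σ i false, τ)
        + 2 * GammaBar N c δt h J Jtil G1 G2 σ τ i := by
    simp only [sgEnergy, GammaBar]
    linarith [hA, hB, hT]
  -- final assembly
  set Γ := GammaBar N c δt h J Jtil G1 G2 σ τ i with hΓdef
  have hZ : 0 < ∑ στ' : (Fin N → Bool) × (Fin N → Bool),
      Real.exp (sgEnergy N c δt s p' h htil J Jtil G1 G2 στ') :=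
    Finset.sum_pos (fun _ _ => Real.exp_pos _) Finset.univ_nonempty
  set Z := ∑ στ' : (Fin N → Bool) × (Fin N → Bool),
      Real.exp (sgEnergy N c δt s p' h htil J Jtil G1 G2 στ') with hZdef
  set E0 := sgEnergy N c δt s p' h htil J Jtil G1 G2 (Function.update σ i false, τ) with hE0
  have hexp2 : Real.exp (E0 + 2 * Γ) = Real.exp E0 * (Real.exp Γ * Real.exp Γ) := by
    rw [two_mul, ← add_assoc, Real.exp_add, Real.exp_add, mul_assoc]
  have hcosh : Real.cosh Γ = (Real.exp Γ + (Real.exp Γ)⁻¹) / 2 := by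
    rw [Real.cosh_eq, Real.exp_neg]
  have hp : (0:ℝ) < Real.exp Γ := Real.exp_pos Γ
  have he0 : (0:ℝ) < Real.exp E0 := Real.exp_pos E0
  simp only [sgP, Fintype.sum_bool, key, hexp2, hcosh]
  cases ε
  · have : spinVal false = -1 := rfl
    rw [this, neg_one_mul, Real.exp_neg]
    field_simp
    ring
  · have : spinVal true = 1 := rfl
    rw [this, one_mul, key, hexp2]
    field_simp
    ring

end
end

section
/- Let M ≥ 1, let 𝒳 be a finite nonempty set, and let P and Q be strictly positive probability mass functions on 𝒳^M. Suppose that for every site q ∈ {1,…,M} and every configuration x ∈ 𝒳^M, the full conditionals agree: P(x_q | x_{−q}) = Q(x_q | x_{−q}), i.e. P(x) / Σ_{y∈𝒳} P(x with q-th coordinate replaced by y) = Q(x) / Σ_{y∈𝒳} Q(x with q-th coordinate replaced by y). Then P = Q. In other words, a consistent collection of strictly positive single-site full conditional distributions determines the joint distribution uniquely. -/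
/-!
The ratio `P / Q` is unchanged by resampling a single site: the full conditionals of `P` and `Q`
at `x` and at `x` with site `q` changed share their normalising sums, so equality of the
conditionals forces `P x / Q x` to equal the ratio of these sums. Changing the sites of `x` one
at a time into those of any `z` then shows that `P / Q` is constant, and as both are normalised
the constant is `1`.
-/

open Finset

theorem Function.apply_eq_of_forall_update_eq {ι X α : Type*} [Fintype ι] [DecidableEq ι]
    {f : (ι → X) → α} (hf : ∀ x i y, f (Function.update x i y) = f x) (x z : ι → X) :
    f z = f x := by
  have hpiecewise : ∀ s : Finset ι, f (s.piecewise z x) = f x := by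
    intro s
    induction s using Finset.induction_on with
    | empty => rw [piecewise_empty]
    | insert i s _ ih => rw [piecewise_insert, hf, ih]
  simpa using hpiecewise univ

section FullConditional

variable {ι X : Type*} [DecidableEq ι] [Fintype X]

theorem div_eq_div_sum_update_of_full_conditional_eq {P Q : (ι → X) → ℝ}
    (hPpos : ∀ x, 0 < P x) (hQpos : ∀ x, 0 < Q x) {q : ι} {x : ι → X}
    (hcond : P x / (∑ y : X, P (Function.update x q y))
      = Q x / (∑ y : X, Q (Function.update x q y))) :
    P x / Q x =
      (∑ y : X, P (Function.update x q y)) / (∑ y : X, Q (Function.update x q y)) := by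
  have : Nonempty X := ⟨x q⟩
  have hSP := sum_pos (fun y _ => hPpos (Function.update x q y)) univ_nonempty
  have hSQ := sum_pos (fun y _ => hQpos (Function.update x q y)) univ_nonempty
  rw [div_eq_div_iff hSP.ne' hSQ.ne'] at hcond
  rw [div_eq_div_iff (hQpos x).ne' hSQ.ne', hcond, mul_comm]

theorem div_update_eq_of_full_conditional_eq {P Q : (ι → X) → ℝ}
    (hPpos : ∀ x, 0 < P x) (hQpos : ∀ x, 0 < Q x)
    (hcond : ∀ (q : ι) (x : ι → X),
      P x / (∑ y : X, P (Function.update x q y))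
        = Q x / (∑ y : X, Q (Function.update x q y)))
    (x : ι → X) (q : ι) (y : X) :
    P (Function.update x q y) / Q (Function.update x q y) = P x / Q x := by
  have h :=
    div_eq_div_sum_update_of_full_conditional_eq hPpos hQpos (hcond q (Function.update x q y))
  simp only [Function.update_idem] at h
  rw [h, div_eq_div_sum_update_of_full_conditional_eq hPpos hQpos (hcond q x)]

end FullConditional

theorem full_conditionals_determine_joint_general
    (M : ℕ) (X : Type*) [Fintype X]
    (P Q : (Fin M → X) → ℝ)
    (hPpos : ∀ x, 0 < P x) (hPsum : ∑ x : Fin M → X, P x = 1)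
    (hQpos : ∀ x, 0 < Q x) (hQsum : ∑ x : Fin M → X, Q x = 1)
    (hcond : ∀ (q : Fin M) (x : Fin M → X),
      P x / (∑ y : X, P (Function.update x q y))
        = Q x / (∑ y : X, Q (Function.update x q y))) :
    P = Q := by
  have hratio : ∀ x z, P z / Q z = P x / Q x :=
    Function.apply_eq_of_forall_update_eq (div_update_eq_of_full_conditional_eq hPpos hQpos hcond)
  funext x
  have hratio_one : P x / Q x = 1 :=
    calc P x / Q x = P x / Q x * ∑ z, Q z := by rw [hQsum, mul_one]
      _ = ∑ z, P z := by
        rw [mul_sum]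
        exact sum_congr rfl fun z _ => by rw [← hratio x z, div_mul_cancel₀ _ (hQpos z).ne']
      _ = 1 := hPsum
  exact (div_eq_one_iff_eq (hQpos x).ne').mp hratio_one

/-- **Brook's lemma for finite state spaces.** Two strictly positive probability
mass functions on a finite product space `𝒳^M` with the same single-site full conditionals are
equal: a consistent collection of strictly positive single-site full conditional distributions
determines the joint distribution uniquely. -/
theorem full_conditionals_determine_joint
    (M : ℕ) (hM : 1 ≤ M) (X : Type*) [Fintype X] [DecidableEq X] [Nonempty X]
    (P Q : (Fin M → X) → ℝ)
    (hPpos : ∀ x, 0 < P x) (hPsum : ∑ x : Fin M → X, P x = 1)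
    (hQpos : ∀ x, 0 < Q x) (hQsum : ∑ x : Fin M → X, Q x = 1)
    (hcond : ∀ (q : Fin M) (x : Fin M → X),
      P x / (∑ y : X, P (Function.update x q y))
        = Q x / (∑ y : X, Q (Function.update x q y))) :
    P = Q :=
  full_conditionals_determine_joint_general M X P Q hPpos hPsum hQpos hQsum hcond
end

section
/- Fix N ≥ 1. The pairwise spin-gas joint distribution P is the unique strictly positive probability mass function Q on {−1,+1}^N × {−1,+1}^N whose full conditionals satisfy, for every i and every (σ, τ): Q(τ_i = ε | σ, τ_{−i}) = exp(ε Γ_i(σ)) / (2 cosh Γ_i(σ)) and Q(σ_i = ε | σ_{−i}, τ) = exp(ε Γ̄_i(σ_{−i}, τ)) / (2 cosh Γ̄_i(σ_{−i}, τ)) for ε ∈ {−1,+1}, where Γ̄_i(σ_{−i}, τ) = h_i + Σ_{j ≠ i} J_{ij} σ_j + Σ_{m=1}^N τ_m ( J̃_{mi} + (c/δt) G¹_{mi} + (c/δt²) G²_{mi} ). -/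
open Real Finset

noncomputable section

/-! Both families of full conditionals are Glauber kernels because the energy is affine in each
single spin, with slope `Γ_i(σ)` in `τ_i` and, by the symmetry of `J`, slope `Γ̄_i(σ_{−i}, τ)` in
`σ_i`. Conversely, if two positive pmfs have the same single-site conditionals, their ratio is
invariant under changing any one spin, hence constant, and normalization makes it `1`. -/

theorem sum_apply_update_sub {ι α : Type*} [Fintype ι] [DecidableEq ι] (F : ι → α → ℝ)
    (x : ι → α) (i : ι) (a : α) :
    ∑ j, F j (Function.update x i a j) - ∑ j, F j (x j) = F i a - F i (x i) := by
  rw [← sum_sub_distrib,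
    Fintype.sum_eq_single i fun j hj => by rw [Function.update_of_ne hj, sub_self],
    Function.update_self]

theorem sum_pairs_update {ι β : Type*} [Fintype ι] [LinearOrder ι] (K : ι → ι → ℝ)
    (hK : ∀ i j, K i j = K j i) (φ : β → ℝ) (x : ι → β) (i : ι) (a : β) :
    (∑ m, ∑ j, if m < j then K m j * φ (Function.update x i a m) * φ (Function.update x i a j)
      else 0)
      = (∑ m, ∑ j, if m < j then K m j * φ (x m) * φ (x j) else 0)
        + (φ a - φ (x i)) * ∑ j ∈ univ.filter (fun j => j ≠ i), K i j * φ (x j) := by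
  set d := φ a - φ (x i)
  have key : ∀ m j, (if m < j then K m j * φ (Function.update x i a m)
        * φ (Function.update x i a j) else 0)
      = (if m < j then K m j * φ (x m) * φ (x j) else 0)
        + ((if m = i then (if i < j then d * (K i j * φ (x j)) else 0) else 0)
          + (if j = i then (if m < i then d * (K m i * φ (x m)) else 0) else 0)) := by
    intro m j
    by_cases hmj : m < j
    · rcases eq_or_ne m i with rfl | hm
      · simp only [hmj, hmj.ne', Function.update_self, Function.update_of_ne, ne_eq,
          not_false_eq_true, if_true, if_false, add_zero, d]
        ring
      rcases eq_or_ne j i with rfl | hj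
      · simp only [hmj, hm, Function.update_self, Function.update_of_ne, ne_eq,
          not_false_eq_true, if_true, if_false, zero_add, d]
        ring
      simp [hm, hj]
    · simp only [hmj, if_false]
      split_ifs <;> simp_all
  simp only [key, sum_add_distrib, sum_ite_irrel, sum_const_zero, sum_ite_eq', mem_univ, if_true]
  rw [← sum_add_distrib, mul_sum, sum_filter]
  congr 1
  refine sum_congr rfl fun j _ => ?_
  rcases lt_trichotomy j i with hj | rfl | hj
  · simp [hj, hj.ne, not_lt_of_gt hj, hK j i]
  · simp
  · simp [hj, hj.ne', not_lt_of_gt hj]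

theorem eq_of_forall_update_eq {ι α γ : Type*} [Fintype ι] [DecidableEq ι]
    (f : (ι → α) → γ) (hf : ∀ x i a, f (Function.update x i a) = f x) (x y : ι → α) :
    f x = f y := by
  suffices ∀ S : Finset ι, ∀ x, (∀ j ∉ S, x j = y j) → f x = f y from
    this univ x fun j hj => absurd (mem_univ j) hj
  intro S
  induction S using Finset.induction_on with
  | empty => exact fun x hx => congrArg f (funext fun j => hx j (notMem_empty j))
  | insert i S _ ih =>
    intro x hx
    rw [← hf x i (y i)]
    refine ih _ fun j hj => ?_
    rcases eq_or_ne j i with rfl | hji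
    · exact Function.update_self ..
    · rw [Function.update_of_ne hji]
      exact hx j (by simp [hji, hj])

theorem div_eq_div_of_div_sum_eq {β : Type*} [Fintype β] {q p : β → ℝ}
    (hq : ∀ b, 0 < q b) (hp : ∀ b, 0 < p b)
    (h : ∀ b, q b / ∑ b', q b' = p b / ∑ b', p b') (a b : β) :
    q a / p a = q b / p b := by
  have hSq : 0 < ∑ b', q b' := sum_pos (fun b _ => hq b) ⟨a, mem_univ a⟩
  have hSp : 0 < ∑ b', p b' := sum_pos (fun b _ => hp b) ⟨a, mem_univ a⟩
  have key : ∀ b, q b / p b = (∑ b', q b') / ∑ b', p b' := fun b => by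
    rw [div_eq_div_iff (hp b).ne' hSp.ne', mul_comm (∑ b', q b')]
    exact (div_eq_div_iff hSq.ne' hSp.ne').mp (h b)
  rw [key, key]

theorem div_eq_div_of_update_cond_eq {ι α : Type*} [Fintype ι] [DecidableEq ι] [Fintype α]
    {q p : (ι → α) → ℝ} (hq : ∀ x, 0 < q x) (hp : ∀ x, 0 < p x)
    (h : ∀ x i a, q (Function.update x i a) / ∑ b, q (Function.update x i b)
      = p (Function.update x i a) / ∑ b, p (Function.update x i b))
    (x y : ι → α) : q x / p x = q y / p y := by
  refine eq_of_forall_update_eq (fun x => q x / p x) (fun x i a => ?_) x y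
  simpa only [Function.update_eq_self] using
    div_eq_div_of_div_sum_eq (fun _ => hq _) (fun _ => hp _) (h x i) a (x i)

theorem eq_of_sum_eq_one_of_div_eq {X : Type*} [Fintype X] {Q P : X → ℝ}
    (hP : ∀ x, 0 < P x) (hQ1 : ∑ x, Q x = 1) (hP1 : ∑ x, P x = 1)
    (hQP : ∀ x y, Q x / P x = Q y / P y) : Q = P := by
  funext x
  have hQ : ∀ y, Q y = Q x / P x * P y := fun y => by
    rw [hQP x y, div_mul_cancel₀ _ (hP y).ne']
  have hk : Q x / P x = 1 := by
    rw [← hQ1, ← mul_one (Q x / P x), ← hP1, mul_sum]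
    exact (sum_congr rfl fun y _ => hQ y).symm
  rw [← div_eq_one_iff_eq (hP x).ne', hk]

def boltzmann {X : Type*} [Fintype X] (E : X → ℝ) (x : X) : ℝ :=
  Real.exp (E x) / ∑ y, Real.exp (E y)

section Boltzmann

variable {X : Type*} [Fintype X] [Nonempty X] (E : X → ℝ)

theorem sum_exp_pos : 0 < ∑ y, Real.exp (E y) :=
  sum_pos (fun _ _ => Real.exp_pos _) univ_nonempty

theorem boltzmann_pos (x : X) : 0 < boltzmann E x :=
  div_pos (Real.exp_pos _) (sum_exp_pos E)

theorem sum_boltzmann : ∑ x, boltzmann E x = 1 := by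
  simp only [boltzmann, ← sum_div, div_self (sum_exp_pos E).ne']

theorem boltzmann_div_sum_of_affine (u : Bool → X) (B g : ℝ)
    (hE : ∀ b, E (u b) = B + spinVal b * g) (ε : Bool) :
    boltzmann E (u ε) / ∑ b, boltzmann E (u b) = Real.exp (spinVal ε * g) / (2 * Real.cosh g) := by
  have hZ : ∑ b, Real.exp (E (u b)) = Real.exp B * (2 * Real.cosh g) := by
    simp only [Fintype.sum_bool, hE, spinVal, if_true, Bool.false_eq_true, if_false, one_mul,
      neg_one_mul, Real.cosh_eq, Real.exp_add]
    ring
  simp only [boltzmann, ← sum_div, div_div_div_cancel_right₀ (sum_exp_pos E).ne']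
  rw [hZ, hE, Real.exp_add, mul_div_mul_left _ _ (Real.exp_ne_zero B)]

end Boltzmann

section SpinGas

variable {N : ℕ} (c δt : ℝ) (s : Fin N → Bool) (p' : Fin N → ℝ) (h htil : Fin N → ℝ)
  (J Jtil G1 G2 : Fin N → Fin N → ℝ)

theorem Gamma_update (σ : Fin N → Bool) (i : Fin N) (ε : Bool) (m : Fin N) :
    _root_.Gamma N c δt s p' htil Jtil G1 G2 (Function.update σ i ε) m
      = _root_.Gamma N c δt s p' htil Jtil G1 G2 σ m
        + (spinVal ε - spinVal (σ i)) * (Jtil m i + c / δt * G1 m i + c / δt ^ 2 * G2 m i) := by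
  unfold _root_.Gamma acc mom
  linear_combination sum_apply_update_sub (fun j b => Jtil m j * spinVal b) σ i ε
    + sum_apply_update_sub (fun j b => G1 m j * (c * (spinVal b - spinVal (s j)) / δt)) σ i ε
    + sum_apply_update_sub
        (fun j b => G2 m j * ((c * (spinVal b - spinVal (s j)) / δt - p' j) / δt)) σ i ε

theorem sgEnergy_update_snd (σ τ : Fin N → Bool) (i : Fin N) (ε : Bool) :
    sgEnergy N c δt s p' h htil J Jtil G1 G2 (σ, Function.update τ i ε)
      = sgEnergy N c δt s p' h htil J Jtil G1 G2 (σ, τ)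
        + (spinVal ε - spinVal (τ i)) * _root_.Gamma N c δt s p' htil Jtil G1 G2 σ i := by
  unfold sgEnergy
  linear_combination
    sum_apply_update_sub (fun m b => spinVal b * _root_.Gamma N c δt s p' htil Jtil G1 G2 σ m) τ i ε

theorem sgEnergy_update_fst (hJ : ∀ i j, J i j = J j i) (σ τ : Fin N → Bool) (i : Fin N)
    (ε : Bool) :
    sgEnergy N c δt s p' h htil J Jtil G1 G2 (Function.update σ i ε, τ)
      = sgEnergy N c δt s p' h htil J Jtil G1 G2 (σ, τ)
        + (spinVal ε - spinVal (σ i)) * GammaBar N c δt h J Jtil G1 G2 σ τ i := by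
  unfold sgEnergy GammaBar
  simp only [Gamma_update, mul_add, sum_add_distrib, mul_left_comm (spinVal (τ _)), ← mul_sum]
  linear_combination sum_apply_update_sub (fun m b => h m * spinVal b) σ i ε
    + sum_pairs_update J hJ spinVal σ i ε

theorem sgP_cond_snd (i : Fin N) (σ τ : Fin N → Bool) (ε : Bool) :
    sgP N c δt s p' h htil J Jtil G1 G2 (σ, Function.update τ i ε)
        / (∑ b : Bool, sgP N c δt s p' h htil J Jtil G1 G2 (σ, Function.update τ i b))
      = Real.exp (spinVal ε * _root_.Gamma N c δt s p' htil Jtil G1 G2 σ i)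
        / (2 * Real.cosh (_root_.Gamma N c δt s p' htil Jtil G1 G2 σ i)) :=
  boltzmann_div_sum_of_affine _ (fun b => (σ, Function.update τ i b))
    (sgEnergy N c δt s p' h htil J Jtil G1 G2 (σ, τ)
      - spinVal (τ i) * _root_.Gamma N c δt s p' htil Jtil G1 G2 σ i) _ (fun b => by rw [sgEnergy_update_snd]; ring) ε

theorem sgP_cond_fst (hJ : ∀ i j, J i j = J j i) (i : Fin N) (σ τ : Fin N → Bool) (ε : Bool) :
    sgP N c δt s p' h htil J Jtil G1 G2 (Function.update σ i ε, τ)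
        / (∑ b : Bool, sgP N c δt s p' h htil J Jtil G1 G2 (Function.update σ i b, τ))
      = Real.exp (spinVal ε * GammaBar N c δt h J Jtil G1 G2 σ τ i)
        / (2 * Real.cosh (GammaBar N c δt h J Jtil G1 G2 σ τ i)) :=
  boltzmann_div_sum_of_affine _ (fun b => (Function.update σ i b, τ))
    (sgEnergy N c δt s p' h htil J Jtil G1 G2 (σ, τ)
      - spinVal (σ i) * GammaBar N c δt h J Jtil G1 G2 σ τ i) _ (fun b => by rw [sgEnergy_update_fst _ _ _ _ _ _ _ _ _ _ hJ]; ring) ε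

end SpinGas

theorem spin_gas_joint_unique_general
    (N : ℕ) (c δt : ℝ)
    (s : Fin N → Bool) (p' : Fin N → ℝ) (h htil : Fin N → ℝ)
    (J Jtil G1 G2 : Fin N → Fin N → ℝ)
    (hJsym : ∀ i j, J i j = J j i) :
    ((∀ στ, 0 < sgP N c δt s p' h htil J Jtil G1 G2 στ)
      ∧ (∑ στ : (Fin N → Bool) × (Fin N → Bool), sgP N c δt s p' h htil J Jtil G1 G2 στ) = 1
      ∧ (∀ (i : Fin N) (σ τ : Fin N → Bool) (ε : Bool),
          sgP N c δt s p' h htil J Jtil G1 G2 (σ, Function.update τ i ε)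
              / (∑ b : Bool, sgP N c δt s p' h htil J Jtil G1 G2 (σ, Function.update τ i b))
            = Real.exp (spinVal ε * Gamma N c δt s p' htil Jtil G1 G2 σ i)
              / (2 * Real.cosh (Gamma N c δt s p' htil Jtil G1 G2 σ i)))
      ∧ (∀ (i : Fin N) (σ τ : Fin N → Bool) (ε : Bool),
          sgP N c δt s p' h htil J Jtil G1 G2 (Function.update σ i ε, τ)
              / (∑ b : Bool, sgP N c δt s p' h htil J Jtil G1 G2 (Function.update σ i b, τ))
            = Real.exp (spinVal ε * GammaBar N c δt h J Jtil G1 G2 σ τ i)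
              / (2 * Real.cosh (GammaBar N c δt h J Jtil G1 G2 σ τ i))))
    ∧ (∀ Q : (Fin N → Bool) × (Fin N → Bool) → ℝ,
        (∀ στ, 0 < Q στ) →
        (∑ στ : (Fin N → Bool) × (Fin N → Bool), Q στ) = 1 →
        (∀ (i : Fin N) (σ τ : Fin N → Bool) (ε : Bool),
          Q (σ, Function.update τ i ε) / (∑ b : Bool, Q (σ, Function.update τ i b))
            = Real.exp (spinVal ε * Gamma N c δt s p' htil Jtil G1 G2 σ i)
              / (2 * Real.cosh (Gamma N c δt s p' htil Jtil G1 G2 σ i))) →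
        (∀ (i : Fin N) (σ τ : Fin N → Bool) (ε : Bool),
          Q (Function.update σ i ε, τ) / (∑ b : Bool, Q (Function.update σ i b, τ))
            = Real.exp (spinVal ε * GammaBar N c δt h J Jtil G1 G2 σ τ i)
              / (2 * Real.cosh (GammaBar N c δt h J Jtil G1 G2 σ τ i))) →
        Q = sgP N c δt s p' h htil J Jtil G1 G2) := by
  set P := sgP N c δt s p' h htil J Jtil G1 G2
  have hPpos : ∀ στ, 0 < P στ := boltzmann_pos _
  have hPsnd := sgP_cond_snd c δt s p' h htil J Jtil G1 G2
  have hPfst := sgP_cond_fst c δt s p' h htil J Jtil G1 G2 hJsym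
  refine ⟨⟨hPpos, sum_boltzmann _, hPsnd, hPfst⟩, fun Q hQ hQ1 hQsnd hQfst => ?_⟩
  refine eq_of_sum_eq_one_of_div_eq hPpos hQ1 (sum_boltzmann _) fun a b => ?_
  calc Q a / P a = Q (a.1, b.2) / P (a.1, b.2) :=
        div_eq_div_of_update_cond_eq (q := fun τ => Q (a.1, τ)) (p := fun τ => P (a.1, τ))
          (fun _ => hQ _) (fun _ => hPpos _)
          (fun τ i ε => (hQsnd i a.1 τ ε).trans (hPsnd i a.1 τ ε).symm) a.2 b.2
    _ = Q b / P b :=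
        div_eq_div_of_update_cond_eq (q := fun σ => Q (σ, b.2)) (p := fun σ => P (σ, b.2))
          (fun _ => hQ _) (fun _ => hPpos _)
          (fun σ i ε => (hQfst i σ b.2 ε).trans (hPfst i σ b.2 ε).symm) a.1 b.1

/-- The pairwise spin-gas joint distribution is the unique strictly positive
pmf on `{−1,+1}^N × {−1,+1}^N` whose full conditionals of `τ_i` are the spin-gas Glauber
kernels with fields `Γ_i(σ)`, and whose full conditionals of `σ_i` are Glauber kernels with
effective fields `Γ̄_i(σ_{−i}, τ)`. -/
theorem spin_gas_joint_unique
    (N : ℕ) (hN : 1 ≤ N) (c δt : ℝ) (hc : 0 < c) (hδt : 0 < δt)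
    (s : Fin N → Bool) (p' : Fin N → ℝ) (h htil : Fin N → ℝ)
    (J Jtil G1 G2 : Fin N → Fin N → ℝ)
    (hJsym : ∀ i j, J i j = J j i) (hJdiag : ∀ i, J i i = 0)
    (hJtsym : ∀ i j, Jtil i j = Jtil j i) (hJtdiag : ∀ i, Jtil i i = 0) :
    ((∀ στ, 0 < sgP N c δt s p' h htil J Jtil G1 G2 στ)
      ∧ (∑ στ : (Fin N → Bool) × (Fin N → Bool), sgP N c δt s p' h htil J Jtil G1 G2 στ) = 1
      ∧ (∀ (i : Fin N) (σ τ : Fin N → Bool) (ε : Bool),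
          sgP N c δt s p' h htil J Jtil G1 G2 (σ, Function.update τ i ε)
              / (∑ b : Bool, sgP N c δt s p' h htil J Jtil G1 G2 (σ, Function.update τ i b))
            = Real.exp (spinVal ε * Gamma N c δt s p' htil Jtil G1 G2 σ i)
              / (2 * Real.cosh (Gamma N c δt s p' htil Jtil G1 G2 σ i)))
      ∧ (∀ (i : Fin N) (σ τ : Fin N → Bool) (ε : Bool),
          sgP N c δt s p' h htil J Jtil G1 G2 (Function.update σ i ε, τ)
              / (∑ b : Bool, sgP N c δt s p' h htil J Jtil G1 G2 (Function.update σ i b, τ))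
            = Real.exp (spinVal ε * GammaBar N c δt h J Jtil G1 G2 σ τ i)
              / (2 * Real.cosh (GammaBar N c δt h J Jtil G1 G2 σ τ i))))
    ∧ (∀ Q : (Fin N → Bool) × (Fin N → Bool) → ℝ,
        (∀ στ, 0 < Q στ) →
        (∑ στ : (Fin N → Bool) × (Fin N → Bool), Q στ) = 1 →
        (∀ (i : Fin N) (σ τ : Fin N → Bool) (ε : Bool),
          Q (σ, Function.update τ i ε) / (∑ b : Bool, Q (σ, Function.update τ i b))
            = Real.exp (spinVal ε * Gamma N c δt s p' htil Jtil G1 G2 σ i)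
              / (2 * Real.cosh (Gamma N c δt s p' htil Jtil G1 G2 σ i))) →
        (∀ (i : Fin N) (σ τ : Fin N → Bool) (ε : Bool),
          Q (Function.update σ i ε, τ) / (∑ b : Bool, Q (Function.update σ i b, τ))
            = Real.exp (spinVal ε * GammaBar N c δt h J Jtil G1 G2 σ τ i)
              / (2 * Real.cosh (GammaBar N c δt h J Jtil G1 G2 σ τ i))) →
        Q = sgP N c δt s p' h htil J Jtil G1 G2) :=
  spin_gas_joint_unique_general N c δt s p' h htil J Jtil G1 G2 hJsym

end
end

section
/- Let 𝒳 be a finite nonempty set, φ, B : 𝒳 → ℝ with φ non-constant, N ≥ 1, k ≥ 1, and let G be an (undirected, simple) graph on {1,…,N}. Let P be a strictly positive probability mass function on 𝒳^N such that: (i) for each i ∈ {1,…,N} there is a function Θ_i of the coordinates x_{−i} with P(x_i | x_{−i}) = exp( Θ_i(x_{−i}) φ(x_i) + B(x_i) ) / Σ_{y∈𝒳} exp( Θ_i(x_{−i}) φ(y) + B(y) ) for every x; and (ii) P factors according to G with cliques of size at most k, i.e. log P(x) = Σ_{C} f_C(x_C) − A, a sum over cliques C of G with |C| ≤ k, for some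 real-valued functions f_C depending only on the coordinates in C. Then there exist weight tensors w^{(l)} : {1,…,N}^l → ℝ (1 ≤ l ≤ k), each invariant under permutation of its arguments and vanishing unless its arguments are pairwise distinct and pairwise adjacent in G, such that Θ_i(x_{−i}) = Σ_{l=1}^{k} Σ_{α_2,…,α_l} w^{(l)}(i, α_2,…,α_l) ∏_{j=2}^{l} φ(x_{α_j}) for all i and x, and P(x) = exp( Σ_{l=1}^{k} (1/l) Σ_{α_1,…,α_l} w^{(l)}(α_1,…,α_l) ∏_{j=1}^{l} φ(x_{α_j}) + Σ_{i=1}^{N} B(x_i) − A′ ) for a normalizing constant A′. -/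
open Real Finset

noncomputable section

namespace Stmt8

variable {ι : Type*} [DecidableEq ι]

lemma sum_powerset_insert' {β : Type*} [AddCommMonoid β] {s : Finset ι} {a : ι} (ha : a ∉ s)
    (f : Finset ι → β) :
    ∑ t ∈ (insert a s).powerset, f t = ∑ t ∈ s.powerset, f t + ∑ t ∈ s.powerset, f (insert a t) :=
  Finset.sum_powerset_insert ha f

lemma card_sdiff_insert_left {T S : Finset ι} {i : ι} (hi : i ∈ T) (hiS : i ∉ S) :
    (T \ S).card = (T.erase i \ S).card + 1 := by
  have : T \ S = insert i (T.erase i \ S) := by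
    ext j
    simp only [mem_sdiff, mem_insert, mem_erase]
    constructor
    · rintro ⟨hjT, hjS⟩
      by_cases hji : j = i
      · left; exact hji
      · right; exact ⟨⟨hji, hjT⟩, hjS⟩
    · rintro (rfl | ⟨⟨_, hjT⟩, hjS⟩)
      · exact ⟨hi, hiS⟩
      · exact ⟨hjT, hjS⟩
  rw [this, Finset.card_insert_of_notMem (by simp)]

lemma sdiff_insert_both {T S : Finset ι} {i : ι} (hiT : i ∉ T) :
    (insert i T) \ (insert i S) = T \ S := by
  ext j
  simp only [mem_sdiff, mem_insert, not_or]
  constructor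
  · rintro ⟨(rfl | hjT), hji, hjS⟩
    · exact absurd rfl hji
    · exact ⟨hjT, hjS⟩
  · rintro ⟨hjT, hjS⟩
    exact ⟨Or.inr hjT, fun h => hiT (h ▸ hjT), hjS⟩

/-- Alternating sum over powerset of a paired function vanishes. -/
lemma alt_sum_zero (T : Finset ι) (t : ι) (ht : t ∈ T) (u : Finset ι → ℝ)
    (hu : ∀ S ⊆ T.erase t, u (insert t S) = u S) :
    ∑ S ∈ T.powerset, (-1 : ℝ) ^ (T \ S).card * u S = 0 := by
  have hT : T = insert t (T.erase t) := (Finset.insert_erase ht).symm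
  rw [hT, sum_powerset_insert' (Finset.notMem_erase t T)]
  rw [← Finset.sum_add_distrib]
  apply Finset.sum_eq_zero
  intro S hS
  rw [Finset.mem_powerset] at hS
  have htS : t ∉ S := fun h => Finset.notMem_erase t T (hS h)
  have h1 : ((insert t (T.erase t)) \ S).card = (T.erase t \ S).card + 1 := by
    rw [← hT]
    exact card_sdiff_insert_left ht htS
  have h2 : ((insert t (T.erase t)) \ (insert t S)) = T.erase t \ S :=
    sdiff_insert_both (Finset.notMem_erase t T)
  rw [h1, h2, hu S hS, pow_succ]
  ring

/-- Alternating sum of signs over the powerset. -/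
lemma alt_sum_const (T : Finset ι) :
    ∑ S ∈ T.powerset, (-1 : ℝ) ^ (T \ S).card = if T = ∅ then 1 else 0 := by
  have : ∑ S ∈ T.powerset, (-1 : ℝ) ^ (T \ S).card = ∑ S ∈ T.powerset, (-1 : ℝ) ^ S.card := by
    apply Finset.sum_nbij' (fun S => T \ S) (fun S => T \ S)
    · intro S hS; simp only [Finset.mem_powerset] at *; exact Finset.sdiff_subset
    · intro S hS; simp only [Finset.mem_powerset] at *; exact Finset.sdiff_subset
    · intro S hS; simp only [Finset.mem_powerset] at hS; exact Finset.sdiff_sdiff_eq_self hS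
    · intro S hS; simp only [Finset.mem_powerset] at hS; exact Finset.sdiff_sdiff_eq_self hS
    · intro S hS; rfl
  rw [this]
  have := @Finset.sum_powerset_neg_one_pow_card ι _ T
  have hcast : ((∑ m ∈ T.powerset, (-1 : ℤ) ^ m.card : ℤ) : ℝ)
      = ∑ S ∈ T.powerset, (-1 : ℝ) ^ S.card := by
    push_cast
    rfl
  rw [← hcast, this]
  split <;> simp


lemma alt_sum_card (T : Finset ι) :
    ∑ S ∈ T.powerset, (-1 : ℝ) ^ S.card = if T = ∅ then 1 else 0 := by
  have := @Finset.sum_powerset_neg_one_pow_card ι _ T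
  have hcast : ((∑ m ∈ T.powerset, (-1 : ℤ) ^ m.card : ℤ) : ℝ)
      = ∑ S ∈ T.powerset, (-1 : ℝ) ^ S.card := by push_cast; rfl
  rw [← hcast, this]
  split <;> simp

lemma powerset_sum_eq_univ_sum [Fintype ι] (T : Finset ι) (v : Finset ι → ℝ) :
    ∑ S ∈ T.powerset, v S = ∑ S : Finset ι, (if S ⊆ T then v S else 0) := by
  rw [Finset.sum_ite, Finset.sum_const_zero, add_zero]
  apply Finset.sum_congr _ (fun _ _ => rfl)
  ext S; simp [Finset.mem_powerset]

/-- Inclusion–exclusion inversion over all subsets of a finite type. -/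
lemma alt_inversion [Fintype ι] (u : Finset ι → ℝ) :
    ∑ T : Finset ι, ∑ S ∈ T.powerset, (-1 : ℝ) ^ (T \ S).card * u S = u Finset.univ := by
  have h1 : ∀ T : Finset ι, ∑ S ∈ T.powerset, (-1 : ℝ) ^ (T \ S).card * u S
      = ∑ S : Finset ι, (if S ⊆ T then (-1 : ℝ) ^ (T \ S).card * u S else 0) :=
    fun T => powerset_sum_eq_univ_sum T _
  simp_rw [h1]
  rw [Finset.sum_comm]
  have h2 : ∀ S : Finset ι, ∑ T : Finset ι, (if S ⊆ T then (-1 : ℝ) ^ (T \ S).card * u S else 0)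
      = (if Sᶜ = ∅ then 1 else 0) * u S := by
    intro S
    rw [Finset.sum_ite, Finset.sum_const_zero, add_zero]
    have hbij : ∑ T ∈ Finset.univ.filter (fun T => S ⊆ T), (-1 : ℝ) ^ (T \ S).card * u S
        = ∑ R ∈ Sᶜ.powerset, (-1 : ℝ) ^ R.card * u S := by
      apply Finset.sum_nbij' (fun T => T \ S) (fun R => S ∪ R)
      · intro T hT
        simp only [Finset.mem_filter, Finset.mem_univ, true_and] at hT
        simp only [Finset.mem_powerset]
        intro j hj
        simp only [Finset.mem_sdiff] at hj
        simp [Finset.mem_compl, hj.2]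
      · intro R hR
        simp [Finset.mem_filter]
      · intro T hT
        simp only [Finset.mem_filter, Finset.mem_univ, true_and] at hT
        exact Finset.union_sdiff_of_subset hT
      · intro R hR
        simp only [Finset.mem_powerset] at hR
        apply Finset.union_sdiff_cancel_left
        rw [Finset.disjoint_left]
        intro j hjS hjR
        have := hR hjR
        simp only [Finset.mem_compl] at this
        exact this hjS
      · intro T hT; rfl
    rw [hbij, ← Finset.sum_mul, alt_sum_card]
  simp_rw [h2]
  have h3 : ∀ x : Finset ι, (if xᶜ = ∅ then (1:ℝ) else 0) * u x
      = if x = Finset.univ then u x else 0 := by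
    intro x
    by_cases h : x = Finset.univ <;> simp [h, Finset.compl_eq_empty_iff]
  simp_rw [h3]
  simp
/-- Multilinearity: a function that is linear in `ψ (x i)` for each `i ∈ T`, with
coefficient not depending on coordinate `i`, has product form. -/
lemma multilinear {X : Type*} (b : X) (ψ : X → ℝ) (t : ℝ) (ht : ψ b = t) (ht0 : t ≠ 0)
    (T : Finset ι) :
    ∀ F : (ι → X) → ℝ,
    (∀ i ∈ T, ∃ E : (ι → X) → ℝ,
      (∀ x y : ι → X, (∀ j, j ≠ i → x j = y j) → E x = E y) ∧
      ∀ x, F x = E x * ψ (x i)) →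
    ∀ x : ι → X, F x * t ^ T.card =
      F (fun j => if j ∈ T then b else x j) * ∏ i ∈ T, ψ (x i) := by
  classical
  induction T using Finset.induction_on with
  | empty => intro F _ x; simp
  | @insert i T' hiT' ih =>
    intro F hF x
    obtain ⟨E, hEloc, hElin⟩ := hF i (Finset.mem_insert_self i T')
    -- key: E x * t = F (update x i b)
    have hkey : ∀ y : ι → X, E y * t = F (Function.update y i b) := by
      intro y
      rw [hElin (Function.update y i b), Function.update_self,
        hEloc (Function.update y i b) y (fun j hj => Function.update_of_ne hj b y), ht]
    -- E satisfies the hypothesis on T'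
    have hE' : ∀ j ∈ T', ∃ E' : (ι → X) → ℝ,
        (∀ x y : ι → X, (∀ m, m ≠ j → x m = y m) → E' x = E' y) ∧
        ∀ x, E x = E' x * ψ (x j) := by
      intro j hj
      have hij : j ≠ i := fun h => hiT' (h ▸ hj)
      obtain ⟨Ej, hEjloc, hEjlin⟩ := hF j (Finset.mem_insert_of_mem hj)
      refine ⟨fun y => Ej (Function.update y i b) / t, ?_, ?_⟩
      · intro x y hxy
        have : Ej (Function.update x i b) = Ej (Function.update y i b) := by
          apply hEjloc
          intro m hm
          by_cases hmi : m = i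
          · subst hmi; simp
          · rw [Function.update_of_ne hmi, Function.update_of_ne hmi]
            exact hxy m hm
        simp only []
        rw [this]
      · intro y
        have h1 : E y * t = Ej (Function.update y i b) * ψ (y j) := by
          rw [hkey y, hEjlin (Function.update y i b), Function.update_of_ne hij]
        field_simp
        linarith [h1]
    have hcard : (insert i T').card = T'.card + 1 := Finset.card_insert_of_notMem hiT'
    have hsub : Function.update (fun j => if j ∈ T' then b else x j) i b
        = fun j => if j ∈ insert i T' then b else x j := by
      funext j
      by_cases hji : j = i
      · subst hji; simp
      · rw [Function.update_of_ne hji]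
        simp [Finset.mem_insert, hji]
    calc F x * t ^ (insert i T').card
        = (E x * t ^ T'.card) * ψ (x i) * t := by
          rw [hElin x, hcard, pow_succ]; ring
      _ = (E (fun j => if j ∈ T' then b else x j) * ∏ m ∈ T', ψ (x m)) * ψ (x i) * t := by
          rw [ih E hE' x]
      _ = (E (fun j => if j ∈ T' then b else x j) * t) * (ψ (x i) * ∏ m ∈ T', ψ (x m)) := by
          ring
      _ = F (fun j => if j ∈ insert i T' then b else x j) * ∏ m ∈ insert i T', ψ (x m) := by
          rw [hkey, hsub, Finset.prod_insert hiT']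
/-- Counting: summing a function of the image over injective tuples. -/
lemma count_inj {n : ℕ} (m : ℕ) (Gf : Finset (Fin n) → ℝ) :
    ∑ α : Fin m → Fin n, (if Function.Injective α then Gf (Finset.image α Finset.univ) else 0)
      = ∑ U : Finset (Fin n), (if U.card = m then (m.factorial : ℝ) * Gf U else 0) := by
  classical
  have step1 : ∀ α : Fin m → Fin n,
      (if Function.Injective α then Gf (Finset.image α Finset.univ) else 0)
      = ∑ U : Finset (Fin n),
          (if Function.Injective α ∧ Finset.image α Finset.univ = U then Gf U else 0) := by
    intro α
    by_cases h : Function.Injective α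
    · simp [h]
    · simp [h]
  simp_rw [step1]
  rw [Finset.sum_comm]
  apply Finset.sum_congr rfl
  intro U _
  by_cases hU : U.card = m
  · rw [if_pos hU]
    -- the set of injective α with image U is in bijection with Perm (Fin m)
    have e := U.orderIsoOfFin hU
    have hsum : ∑ α : Fin m → Fin n,
        (if Function.Injective α ∧ Finset.image α Finset.univ = U then Gf U else 0)
        = ∑ α ∈ Finset.univ.filter
            (fun α : Fin m → Fin n => Function.Injective α ∧ Finset.image α Finset.univ = U),
            Gf U := by
      rw [Finset.sum_filter]
    rw [hsum, Finset.sum_const]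
    have hcard : (Finset.univ.filter
        (fun α : Fin m → Fin n => Function.Injective α ∧ Finset.image α Finset.univ = U)).card
        = m.factorial := by
      have himg : Finset.univ.filter
          (fun α : Fin m → Fin n => Function.Injective α ∧ Finset.image α Finset.univ = U)
          = Finset.image (fun σ : Equiv.Perm (Fin m) => (fun j => (e (σ j) : Fin n)))
              Finset.univ := by
        ext α
        simp only [Finset.mem_filter, Finset.mem_univ, true_and, Finset.mem_image]
        constructor
        · rintro ⟨hinj, himgU⟩
          have hmem : ∀ j, α j ∈ U := by
            intro j
            rw [← himgU]
            exact Finset.mem_image_of_mem α (Finset.mem_univ j)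
          set g : Fin m → Fin m := fun j => e.symm ⟨α j, hmem j⟩ with hg
          have hginj : Function.Injective g := by
            intro j1 j2 h
            apply hinj
            have := congrArg e h
            simp only [hg, OrderIso.apply_symm_apply] at this
            exact congrArg Subtype.val this
          refine ⟨Equiv.ofBijective g (Finite.injective_iff_bijective.mp hginj), ?_⟩
          funext j
          show ((e (g j) : { x // x ∈ U }) : Fin n) = α j
          simp [hg]
        · rintro ⟨σ, rfl⟩
          have hinj : Function.Injective (fun j => (e (σ j) : Fin n)) := by
            intro j1 j2 h
            apply σ.injective
            apply e.injective
            exact Subtype.ext h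
          refine ⟨hinj, ?_⟩
          apply Finset.eq_of_subset_of_card_le
          · intro v hv
            simp only [Finset.mem_image] at hv
            obtain ⟨j, _, rfl⟩ := hv
            exact (e (σ j)).2
          · rw [Finset.card_image_of_injective _ hinj, Finset.card_univ, Fintype.card_fin, hU]
      rw [himg, Finset.card_image_of_injective, Finset.card_univ, Fintype.card_perm,
        Fintype.card_fin]
      intro σ1 σ2 h
      apply Equiv.ext
      intro j
      have := congrFun h j
      simp only at this
      exact e.injective (Subtype.ext this)
    rw [hcard]
    simp [mul_comm]
  · rw [if_neg hU]
    apply Finset.sum_eq_zero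
    intro α _
    rw [if_neg]
    rintro ⟨hinj, himg⟩
    apply hU
    rw [← himg, Finset.card_image_of_injective _ hinj, Finset.card_univ, Fintype.card_fin]
lemma sum_card_one {n : ℕ} (v : Finset (Fin n) → ℝ) :
    ∑ U : Finset (Fin n), (if U.card = 1 then v U else 0) = ∑ i : Fin n, v {i} := by
  have h := count_inj (n := n) 1 v
  have h2 : ∑ α : Fin 1 → Fin n, (if Function.Injective α then v (Finset.image α Finset.univ) else 0)
      = ∑ i : Fin n, v {i} := by
    rw [← (Equiv.funUnique (Fin 1) (Fin n)).symm.sum_comp]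
    apply Finset.sum_congr rfl
    intro i _
    have hinj : Function.Injective ((Equiv.funUnique (Fin 1) (Fin n)).symm i) := by
      intro j1 j2 _; exact Subsingleton.elim j1 j2
    rw [if_pos hinj]
    have himg : Finset.image ((Equiv.funUnique (Fin 1) (Fin n)).symm i) Finset.univ = {i} := by
      ext v'
      simp [Equiv.funUnique]
    rw [himg]
  rw [h2] at h
  simpa using h.symm

/-- The Möbius transform of `H` on `T` with base point `a`. -/
def Dfun {X : Type*} {N : ℕ} [DecidableEq X] (a : X) (H : (Fin N → X) → ℝ)
    (T : Finset (Fin N)) (x : Fin N → X) : ℝ :=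
  ∑ S ∈ T.powerset, (-1 : ℝ) ^ (T \ S).card * H (fun j => if j ∈ S then x j else a)

lemma Dfun_total {X : Type*} {N : ℕ} [DecidableEq X] (a : X) (H : (Fin N → X) → ℝ)
    (x : Fin N → X) : ∑ T : Finset (Fin N), Dfun a H T x = H x := by
  have := alt_inversion (fun S : Finset (Fin N) => H (fun j => if j ∈ S then x j else a))
  simp only [Dfun]
  rw [this]
  congr 1
  funext j
  simp
/-- Master lemma: monomial expansion of `H` supported on small cliques. -/
lemma master {X : Type*} [Fintype X] [DecidableEq X] {N k : ℕ} (hk : 1 ≤ k)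
    (G : SimpleGraph (Fin N)) (a b : X) (φ B : X → ℝ) (hab : φ b - φ a ≠ 0)
    (H : (Fin N → X) → ℝ) (Θ : Fin N → (Fin N → X) → ℝ)
    (hΘlocal : ∀ (i : Fin N) (x y : Fin N → X), (∀ j, j ≠ i → x j = y j) → Θ i x = Θ i y)
    (g : Fin N → (Fin N → X) → ℝ)
    (hglocal : ∀ (i : Fin N) (x y : Fin N → X), (∀ j, j ≠ i → x j = y j) → g i x = g i y)
    (hA : ∀ (i : Fin N) (x : Fin N → X), H x = Θ i x * φ (x i) + B (x i) + g i x)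
    (f : Finset (Fin N) → (Fin N → X) → ℝ) (A : ℝ)
    (hfclique : ∀ C : Finset (Fin N),
      ¬ (G.IsClique (C : Set (Fin N)) ∧ C.card ≤ k) → f C = 0)
    (hflocal : ∀ (C : Finset (Fin N)) (x y : Fin N → X),
      (∀ j ∈ C, x j = y j) → f C x = f C y)
    (hfact : ∀ x : Fin N → X, H x = (∑ C : Finset (Fin N), f C x) - A) :
    ∃ (c : Finset (Fin N) → ℝ) (K : ℝ),
      (∀ U : Finset (Fin N), ¬ (G.IsClique (U : Set (Fin N)) ∧ U.card ≤ k) → c U = 0) ∧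
      ∀ x : Fin N → X,
        H x = (∑ U : Finset (Fin N), c U * ∏ i ∈ U, φ (x i)) + (∑ i, B (x i)) + K := by
  classical
  set t : ℝ := φ b - φ a with htdef
  -- difference identity
  have hdiff : ∀ (i : Fin N) (y : Fin N → X),
      H y - H (Function.update y i a) = Θ i y * (φ (y i) - φ a) + (B (y i) - B a) := by
    intro i y
    have h1 := hA i y
    have h2 := hA i (Function.update y i a)
    rw [Function.update_self,
      hΘlocal i (Function.update y i a) y (fun j hj => Function.update_of_ne hj a y),
      hglocal i (Function.update y i a) y (fun j hj => Function.update_of_ne hj a y)] at h2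
    rw [h1, h2]; ring
  -- (D1) vanishing on non-small-cliques
  have hD1 : ∀ (T : Finset (Fin N)), ¬ (G.IsClique (T : Set (Fin N)) ∧ T.card ≤ k) →
      ∀ x, Dfun a H T x = 0 := by
    intro T hT x
    have hTne : T ≠ ∅ := by
      rintro rfl
      exact hT ⟨by simp, by simp⟩
    unfold Dfun
    have hsplit : ∀ S : Finset (Fin N), (-1 : ℝ) ^ (T \ S).card
          * H (fun j => if j ∈ S then x j else a)
        = (∑ C : Finset (Fin N), (-1 : ℝ) ^ (T \ S).card
            * f C (fun j => if j ∈ S then x j else a))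
          - (-1 : ℝ) ^ (T \ S).card * A := by
      intro S
      rw [hfact, mul_sub, Finset.mul_sum]
    simp_rw [hsplit]
    rw [Finset.sum_sub_distrib, ← Finset.sum_mul, alt_sum_const, if_neg hTne, zero_mul, sub_zero]
    rw [Finset.sum_comm]
    apply Finset.sum_eq_zero
    intro C _
    by_cases hC : G.IsClique (C : Set (Fin N)) ∧ C.card ≤ k
    · -- C is a small clique; T ⊄ C
      have hTC : ¬ T ⊆ C := by
        intro hsub
        exact hT ⟨hC.1.subset (Finset.coe_subset.mpr hsub), le_trans (Finset.card_le_card hsub) hC.2⟩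
      obtain ⟨i, hiT, hiC⟩ := Finset.not_subset.mp hTC
      apply alt_sum_zero T i hiT
      intro S hS
      apply hflocal
      intro j hj
      have hji : j ≠ i := fun h => hiC (h ▸ hj)
      simp [Finset.mem_insert, hji]
    · rw [hfclique C hC]
      simp
  -- (D2) linear structure in coordinate i ∈ T
  have hD2 : ∀ (T : Finset (Fin N)) (i : Fin N), i ∈ T → ∀ x,
      Dfun a H T x
        = (∑ S ∈ (T.erase i).powerset, (-1 : ℝ) ^ ((T.erase i) \ S).card
            * Θ i (fun j => if j ∈ insert i S then x j else a)) * (φ (x i) - φ a)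
          + (if T.erase i = ∅ then 1 else 0) * (B (x i) - B a) := by
    intro T i hiT x
    have hT : T = insert i (T.erase i) := (Finset.insert_erase hiT).symm
    unfold Dfun
    rw [hT, sum_powerset_insert' (Finset.notMem_erase i T)]
    rw [← hT]
    have hterm : ∀ S ∈ (T.erase i).powerset,
        (-1 : ℝ) ^ (T \ S).card * H (fun j => if j ∈ S then x j else a)
          + (-1 : ℝ) ^ (T \ insert i S).card * H (fun j => if j ∈ insert i S then x j else a)
        = (-1 : ℝ) ^ ((T.erase i) \ S).card
            * Θ i (fun j => if j ∈ insert i S then x j else a) * (φ (x i) - φ a)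
          + (-1 : ℝ) ^ ((T.erase i) \ S).card * (B (x i) - B a) := by
      intro S hS
      rw [Finset.mem_powerset] at hS
      have hiS : i ∉ S := fun h => Finset.notMem_erase i T (hS h)
      have hc1 : (T \ S).card = ((T.erase i) \ S).card + 1 := card_sdiff_insert_left hiT hiS
      have hc2 : T \ insert i S = (T.erase i) \ S := by
        conv_lhs => rw [hT]
        exact sdiff_insert_both (Finset.notMem_erase i T)
      have hupd : (fun j => if j ∈ S then x j else a)
          = Function.update (fun j => if j ∈ insert i S then x j else a) i a := by
        funext j
        by_cases hji : j = i
        · subst hji; simp [hiS]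
        · rw [Function.update_of_ne hji]
          simp [Finset.mem_insert, hji]
      have := hdiff i (fun j => if j ∈ insert i S then x j else a)
      simp only [Finset.mem_insert_self, if_true] at this
      rw [← hupd] at this
      rw [hc1, hc2, pow_succ]
      linear_combination ((-1 : ℝ) ^ (T.erase i \ S).card) * this
    rw [← Finset.sum_add_distrib, Finset.sum_congr rfl hterm, Finset.sum_add_distrib,
      ← Finset.sum_mul, ← Finset.sum_mul, alt_sum_const]
  -- (D3) product form for card ≥ 2
  have hD3 : ∀ T : Finset (Fin N), 2 ≤ T.card → ∀ x : Fin N → X,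
      Dfun a H T x = (Dfun a H T (fun _ => b) / t ^ T.card) * ∏ i ∈ T, (φ (x i) - φ a) := by
    intro T hT2 x
    have hyp : ∀ i ∈ T, ∃ E : (Fin N → X) → ℝ,
        (∀ x y : Fin N → X, (∀ j, j ≠ i → x j = y j) → E x = E y) ∧
        ∀ x, Dfun a H T x = E x * ((fun y => φ y - φ a) (x i)) := by
      intro i hiT
      have herase : T.erase i ≠ ∅ := by
        have : 1 ≤ (T.erase i).card := by
          rw [Finset.card_erase_of_mem hiT]; omega
        intro h; rw [h] at this; simp at this
      refine ⟨fun x => ∑ S ∈ (T.erase i).powerset, (-1 : ℝ) ^ ((T.erase i) \ S).card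
          * Θ i (fun j => if j ∈ insert i S then x j else a), ?_, ?_⟩
      · intro x y hxy
        apply Finset.sum_congr rfl
        intro S _
        congr 1
        apply hΘlocal
        intro j hj
        by_cases hjS : j ∈ insert i S <;> simp [hjS, hxy j hj]
      · intro x
        rw [hD2 T i hiT x, if_neg herase]
        simp
    have hml := multilinear b (fun y => φ y - φ a) t htdef.symm hab T (Dfun a H T) hyp x
    have hconstb : Dfun a H T (fun j => if j ∈ T then b else x j) = Dfun a H T (fun _ => b) := by
      unfold Dfun
      apply Finset.sum_congr rfl
      intro S hS
      rw [Finset.mem_powerset] at hS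
      apply congrArg (fun y => (-1 : ℝ) ^ (T \ S).card * H y)
      funext j
      by_cases hjS : j ∈ S
      · simp [hjS, hS hjS]
      · simp [hjS]
    rw [hconstb] at hml
    have ht : t ^ T.card ≠ 0 := pow_ne_zero _ hab
    field_simp
    linarith [hml]
  -- the weights in the (φ - φ a) basis
  set W : Finset (Fin N) → ℝ := fun T =>
    if T.card = 1 then ∑ i ∈ T, Θ i (fun _ => a)
    else if 2 ≤ T.card then Dfun a H T (fun _ => b) / t ^ T.card else 0 with hWdef
  have hper : ∀ (T : Finset (Fin N)) (x : Fin N → X),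
      Dfun a H T x = W T * ∏ i ∈ T, (φ (x i) - φ a)
        + (if T.card = 1 then ∑ i ∈ T, (B (x i) - B a) else 0)
        + (if T = ∅ then H (fun _ => a) else 0) := by
    intro T x
    by_cases h1 : T.card = 1
    · obtain ⟨i, rfl⟩ := Finset.card_eq_one.mp h1
      have hne : ({i} : Finset (Fin N)) ≠ ∅ := by simp
      rw [hWdef]
      simp only [h1, if_pos, if_neg hne]
      rw [hD2 {i} i (Finset.mem_singleton_self i) x]
      rw [Finset.erase_singleton]
      simp only [Finset.powerset_empty, Finset.sum_singleton, Finset.sdiff_empty,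
        Finset.card_empty, pow_zero, one_mul, if_pos rfl]
      have : Θ i (fun j => if j ∈ insert i (∅ : Finset (Fin N)) then x j else a)
          = Θ i (fun _ => a) := by
        apply hΘlocal
        intro j hj
        simp [Finset.mem_insert, hj]
      rw [this]
      simp [Finset.sum_singleton]
    · by_cases h2 : 2 ≤ T.card
      · have hne : T ≠ ∅ := by
          intro h; rw [h] at h2; simp at h2
        rw [hD3 T h2 x, hWdef]
        simp only [if_neg h1, if_pos h2, if_neg hne, add_zero]
      · have h0 : T = ∅ := by
          rw [← Finset.card_eq_zero]; omega
        subst h0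
        unfold Dfun
        rw [hWdef]
        simp
  -- assembled (φ - φ a)-basis expansion
  have hexp : ∀ x : Fin N → X,
      H x = (∑ T : Finset (Fin N), W T * ∏ i ∈ T, (φ (x i) - φ a))
        + (∑ i, (B (x i) - B a)) + H (fun _ => a) := by
    intro x
    rw [← Dfun_total a H x]
    rw [Finset.sum_congr rfl (fun T _ => hper T x), Finset.sum_add_distrib,
      Finset.sum_add_distrib]
    congr 1
    · congr 1
      rw [sum_card_one (fun T => ∑ i ∈ T, (B (x i) - B a))]
      apply Finset.sum_congr rfl
      intro i _
      simp
    · rw [Finset.sum_ite_eq' Finset.univ (∅ : Finset (Fin N)) (fun _ => H (fun _ => a))]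
      simp
  -- W vanishes off small cliques
  have hWsupp : ∀ T : Finset (Fin N), ¬ (G.IsClique (T : Set (Fin N)) ∧ T.card ≤ k) →
      W T = 0 := by
    intro T hT
    rw [hWdef]
    by_cases h1 : T.card = 1
    · exfalso
      obtain ⟨i, rfl⟩ := Finset.card_eq_one.mp h1
      apply hT
      constructor
      · simp [SimpleGraph.isClique_singleton]
      · rw [h1]; exact hk
    · by_cases h2 : 2 ≤ T.card
      · simp only [h1, if_neg, h2, if_pos]
        rw [hD1 T hT]
        simp
      · simp [h1, h2]
  -- pass to the monomial basis
  refine ⟨fun U => ∑ T : Finset (Fin N),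
      (if U ⊆ T then W T * (-φ a) ^ ((T \ U).card) else 0),
    H (fun _ => a) - ∑ _i : Fin N, B a, ?_, ?_⟩
  · intro U hU
    apply Finset.sum_eq_zero
    intro T _
    by_cases hUT : U ⊆ T
    · rw [if_pos hUT, hWsupp T, zero_mul]
      intro hTk
      exact hU ⟨hTk.1.subset (Finset.coe_subset.mpr hUT),
        le_trans (Finset.card_le_card hUT) hTk.2⟩
    · rw [if_neg hUT]
  · intro x
    rw [hexp x]
    have hmono : ∑ T : Finset (Fin N), W T * ∏ i ∈ T, (φ (x i) - φ a)
        = ∑ U : Finset (Fin N),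
            (∑ T : Finset (Fin N), (if U ⊆ T then W T * (-φ a) ^ ((T \ U).card) else 0))
              * ∏ i ∈ U, φ (x i) := by
      have hprod : ∀ T : Finset (Fin N), ∏ i ∈ T, (φ (x i) - φ a)
          = ∑ U ∈ T.powerset, (∏ i ∈ U, φ (x i)) * (-φ a) ^ ((T \ U).card) := by
        intro T
        have := Finset.prod_add (fun i => φ (x i)) (fun _ => -φ a) T
        simp only [Finset.prod_const] at this
        rw [← this]
        apply Finset.prod_congr rfl
        intro i _
        ring
      simp_rw [hprod, Finset.mul_sum]
      have hswap : ∀ T : Finset (Fin N),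
          ∑ U ∈ T.powerset, W T * ((∏ i ∈ U, φ (x i)) * (-φ a) ^ ((T \ U).card))
          = ∑ U : Finset (Fin N),
              (if U ⊆ T then W T * (-φ a) ^ ((T \ U).card) else 0) * ∏ i ∈ U, φ (x i) := by
        intro T
        rw [powerset_sum_eq_univ_sum T
          (fun U => W T * ((∏ i ∈ U, φ (x i)) * (-φ a) ^ ((T \ U).card)))]
        apply Finset.sum_congr rfl
        intro U _
        by_cases hUT : U ⊆ T
        · rw [if_pos hUT, if_pos hUT]; ring
        · rw [if_neg hUT, if_neg hUT, zero_mul]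
      simp_rw [hswap]
      rw [Finset.sum_comm]
      simp_rw [Finset.sum_mul]
    rw [hmono]
    rw [Finset.sum_sub_distrib]
    ring
lemma image_cons {n N : ℕ} (i : Fin N) (α : Fin n → Fin N) :
    Finset.image (Fin.cons i α : Fin (n + 1) → Fin N) Finset.univ
      = insert i (Finset.image α Finset.univ) := by
  ext v
  simp only [Finset.mem_image, Finset.mem_insert, Finset.mem_univ, true_and]
  constructor
  · rintro ⟨j, rfl⟩
    rcases Fin.eq_zero_or_eq_succ j with rfl | ⟨j', rfl⟩
    · left; simp
    · right; exact ⟨j', by simp⟩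
  · rintro (rfl | ⟨j', _, rfl⟩)
    · exact ⟨0, by simp⟩
    · exact ⟨j'.succ, by simp⟩

def Qfun {N : ℕ} {X : Type*} [Fintype X] (c : Finset (Fin N) → ℝ) (φ : X → ℝ)
    (i : Fin N) (x : Fin N → X) : ℝ :=
  ∑ U : Finset (Fin N), if i ∉ U then c (insert i U) * ∏ j ∈ U, φ (x j) else 0

lemma Qfun_local {N : ℕ} {X : Type*} [Fintype X] (c : Finset (Fin N) → ℝ) (φ : X → ℝ)
    (i : Fin N) (x y : Fin N → X) (hxy : ∀ j, j ≠ i → x j = y j) :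
    Qfun c φ i x = Qfun c φ i y := by
  unfold Qfun
  apply Finset.sum_congr rfl
  intro U _
  by_cases hiU : i ∉ U
  · rw [if_pos hiU, if_pos hiU]
    congr 1
    apply Finset.prod_congr rfl
    intro j hj
    rw [hxy j (fun h => hiU (h ▸ hj))]
  · rw [if_neg hiU, if_neg hiU]

def Rfun {N : ℕ} {X : Type*} [Fintype X] (c : Finset (Fin N) → ℝ) (K : ℝ) (φ B : X → ℝ)
    (i : Fin N) (x : Fin N → X) : ℝ :=
  (∑ U : Finset (Fin N), if i ∉ U then c U * ∏ j ∈ U, φ (x j) else 0)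
    + (∑ j ∈ Finset.univ.erase i, B (x j)) + K

lemma Rfun_local {N : ℕ} {X : Type*} [Fintype X] (c : Finset (Fin N) → ℝ) (K : ℝ) (φ B : X → ℝ)
    (i : Fin N) (x y : Fin N → X) (hxy : ∀ j, j ≠ i → x j = y j) :
    Rfun c K φ B i x = Rfun c K φ B i y := by
  unfold Rfun
  have h1 : (∑ U : Finset (Fin N), if i ∉ U then c U * ∏ j ∈ U, φ (x j) else 0)
      = ∑ U : Finset (Fin N), if i ∉ U then c U * ∏ j ∈ U, φ (y j) else 0 := by
    apply Finset.sum_congr rfl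
    intro U _
    by_cases hiU : i ∉ U
    · rw [if_pos hiU, if_pos hiU]
      congr 1
      apply Finset.prod_congr rfl
      intro j hj
      rw [hxy j (fun h => hiU (h ▸ hj))]
    · rw [if_neg hiU, if_neg hiU]
  have h2 : ∑ j ∈ Finset.univ.erase i, B (x j) = ∑ j ∈ Finset.univ.erase i, B (y j) := by
    apply Finset.sum_congr rfl
    intro j hj
    rw [hxy j (Finset.ne_of_mem_erase hj)]
  rw [h1, h2]

lemma master_split {N : ℕ} {X : Type*} [Fintype X] (c : Finset (Fin N) → ℝ) (K : ℝ)
    (φ B : X → ℝ) (H : (Fin N → X) → ℝ)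
    (hmaster : ∀ x : Fin N → X,
      H x = (∑ U : Finset (Fin N), c U * ∏ j ∈ U, φ (x j)) + (∑ j, B (x j)) + K)
    (i : Fin N) (x : Fin N → X) :
    H x = φ (x i) * Qfun c φ i x + B (x i) + Rfun c K φ B i x := by
  rw [hmaster x]
  have hsplit : ∑ U : Finset (Fin N), c U * ∏ j ∈ U, φ (x j)
      = (∑ U : Finset (Fin N), if i ∈ U then c U * ∏ j ∈ U, φ (x j) else 0)
        + (∑ U : Finset (Fin N), if i ∉ U then c U * ∏ j ∈ U, φ (x j) else 0) := by
    rw [← Finset.sum_add_distrib]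
    apply Finset.sum_congr rfl
    intro U _
    by_cases hiU : i ∈ U <;> simp [hiU]
  have hreindex : ∑ U : Finset (Fin N), (if i ∈ U then c U * ∏ j ∈ U, φ (x j) else 0)
      = φ (x i) * Qfun c φ i x := by
    unfold Qfun
    rw [Finset.mul_sum]
    have hR : ∀ U : Finset (Fin N),
        φ (x i) * (if i ∉ U then c (insert i U) * ∏ j ∈ U, φ (x j) else 0)
        = (if i ∉ U then c (insert i U) * (φ (x i) * ∏ j ∈ U, φ (x j)) else 0) := by
      intro U
      by_cases hiU : i ∉ U
      · rw [if_pos hiU, if_pos hiU]; ring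
      · rw [if_neg hiU, if_neg hiU, mul_zero]
    simp_rw [hR]
    rw [← Finset.sum_filter, ← Finset.sum_filter]
    apply Finset.sum_nbij' (fun U => U.erase i) (fun V => insert i V)
    · intro U hU
      simp only [Finset.mem_filter, Finset.mem_univ, true_and] at *
      exact Finset.notMem_erase i U
    · intro V hV
      simp only [Finset.mem_filter, Finset.mem_univ, true_and] at *
      exact Finset.mem_insert_self i V
    · intro U hU
      simp only [Finset.mem_filter, Finset.mem_univ, true_and] at hU
      exact Finset.insert_erase hU
    · intro V hV
      simp only [Finset.mem_filter, Finset.mem_univ, true_and] at hV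
      exact Finset.erase_insert hV
    · intro U hU
      simp only [Finset.mem_filter, Finset.mem_univ, true_and] at hU
      rw [Finset.insert_erase hU, ← Finset.mul_prod_erase U (fun j => φ (x j)) hU]
  have hBsplit : ∑ j, B (x j) = B (x i) + ∑ j ∈ Finset.univ.erase i, B (x j) :=
    (Finset.univ.add_sum_erase (fun j => B (x j)) (Finset.mem_univ i)).symm
  rw [hsplit, hreindex, hBsplit]
  unfold Rfun
  ring

end Stmt8

open Stmt8


/-- **Lemma B.2 / Theorem 2 of Yang et al..** Suppose a strictly positive pmf
`P` on `𝒳^N` has node-conditionals in a univariate exponential family with canonical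
parameters `Θ_i` depending only on `x_{−i}`, and `P` factors according to a graph `G` with
cliques of size at most `k`. Then the canonical parameters have the tensor-factorized form
built from symmetric weight tensors `w^{(l)}` supported on tuples of pairwise distinct,
pairwise adjacent nodes, and the joint has the corresponding exponential-family form. -/
theorem factored_node_conditionals_tensor_form
    (X : Type*) [Fintype X] [DecidableEq X] [Nonempty X]
    (φ B : X → ℝ) (hφ : ∃ a b : X, φ a ≠ φ b)
    (N k : ℕ) (hN : 1 ≤ N) (hk : 1 ≤ k)
    (G : SimpleGraph (Fin N)) [DecidableRel G.Adj]
    (P : (Fin N → X) → ℝ)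
    (hpos : ∀ x, 0 < P x) (hsum : ∑ x : Fin N → X, P x = 1)
    (Θ : Fin N → (Fin N → X) → ℝ)
    (hΘlocal : ∀ (i : Fin N) (x y : Fin N → X), (∀ j, j ≠ i → x j = y j) → Θ i x = Θ i y)
    (hcond : ∀ (i : Fin N) (x : Fin N → X),
      P x / (∑ y : X, P (Function.update x i y))
        = Real.exp (Θ i x * φ (x i) + B (x i))
          / ∑ y : X, Real.exp (Θ i (Function.update x i y) * φ y + B y))
    (f : Finset (Fin N) → (Fin N → X) → ℝ) (A : ℝ)
    (hfclique : ∀ C : Finset (Fin N),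
      ¬ (G.IsClique (C : Set (Fin N)) ∧ C.card ≤ k) → f C = 0)
    (hflocal : ∀ (C : Finset (Fin N)) (x y : Fin N → X),
      (∀ j ∈ C, x j = y j) → f C x = f C y)
    (hfact : ∀ x : Fin N → X,
      Real.log (P x) = (∑ C : Finset (Fin N), f C x) - A) :
    ∃ w : (l : ℕ) → (Fin l → Fin N) → ℝ,
      (∀ l, l ≤ k → ∀ (e : Equiv.Perm (Fin l)) (α : Fin l → Fin N), w l (α ∘ e) = w l α)
      ∧ (∀ l, l ≤ k → ∀ α : Fin l → Fin N,
          ¬ (Function.Injective α ∧ ∀ m n : Fin l, m ≠ n → G.Adj (α m) (α n)) → w l α = 0)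
      ∧ (∀ (i : Fin N) (x : Fin N → X),
          Θ i x = ∑ l ∈ Finset.range k, ∑ α : Fin l → Fin N,
            w (l + 1) (Fin.cons i α) * ∏ j, φ (x (α j)))
      ∧ (∃ A' : ℝ, ∀ x : Fin N → X,
          P x = Real.exp
            ((∑ l ∈ Finset.range k, (1 / ((l : ℝ) + 1)) *
                ∑ α : Fin (l + 1) → Fin N, w (l + 1) α * ∏ j, φ (x (α j)))
              + (∑ i, B (x i)) - A')) := by
  classical
  obtain ⟨a, b, hab⟩ := hφ
  have htne : φ b - φ a ≠ 0 := sub_ne_zero.mpr (Ne.symm hab)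
  set H : (Fin N → X) → ℝ := fun x => Real.log (P x) with hH
  set g : Fin N → (Fin N → X) → ℝ := fun i x =>
    Real.log (∑ y : X, P (Function.update x i y))
      - Real.log (∑ y : X, Real.exp (Θ i x * φ y + B y)) with hg
  have hZpos : ∀ (i : Fin N) (x : Fin N → X),
      0 < ∑ y : X, Real.exp (Θ i x * φ y + B y) :=
    fun i x => Finset.sum_pos (fun y _ => Real.exp_pos _) Finset.univ_nonempty
  have hSpos : ∀ (i : Fin N) (x : Fin N → X), 0 < ∑ y : X, P (Function.update x i y) :=
    fun i x => Finset.sum_pos (fun y _ => hpos _) Finset.univ_nonempty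
  -- Step A: exponential-family identity for log P
  have hA : ∀ (i : Fin N) (x : Fin N → X),
      H x = Θ i x * φ (x i) + B (x i) + g i x := by
    intro i x
    have hcond' := hcond i x
    have hΘup : ∀ y : X, Θ i (Function.update x i y) = Θ i x := fun y =>
      hΘlocal i (Function.update x i y) x (fun j hj => Function.update_of_ne hj y x)
    simp only [hΘup] at hcond'
    rw [div_eq_div_iff (hSpos i x).ne' (hZpos i x).ne'] at hcond'
    have hPx : P x = Real.exp (Θ i x * φ (x i) + B (x i))
        * (∑ y : X, P (Function.update x i y))
        / (∑ y : X, Real.exp (Θ i x * φ y + B y)) :=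
      (eq_div_iff (hZpos i x).ne').mpr hcond'
    show Real.log (P x) = _
    rw [hPx, Real.log_div (mul_ne_zero (Real.exp_ne_zero _) (hSpos i x).ne')
      (hZpos i x).ne', Real.log_mul (Real.exp_ne_zero _) (hSpos i x).ne', Real.log_exp, hg]
    ring
  have hglocal : ∀ (i : Fin N) (x y : Fin N → X),
      (∀ j, j ≠ i → x j = y j) → g i x = g i y := by
    intro i x y hxy
    rw [hg]
    have h1 : ∀ z : X, Function.update x i z = Function.update y i z := by
      intro z
      funext j
      by_cases hji : j = i
      · subst hji; simp
      · rw [Function.update_of_ne hji, Function.update_of_ne hji]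
        exact hxy j hji
    simp only []
    rw [Finset.sum_congr rfl (fun z _ => by rw [h1 z]), hΘlocal i x y hxy]
  obtain ⟨c, K, hcsupp, hmaster⟩ := master hk G a b φ B htne H Θ hΘlocal g hglocal hA
    f A hfclique hflocal hfact
  have hccard : ∀ U : Finset (Fin N), k < U.card → c U = 0 := by
    intro U h
    exact hcsupp U (fun hc => absurd hc.2 (not_le.mpr h))
  refine ⟨fun l α => if Function.Injective α
      then c (Finset.image α Finset.univ) / (Nat.factorial (l - 1)) else 0, ?_, ?_, ?_, ?_⟩
  -- symmetry
  · intro l _ e α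
    simp only []
    have himg : Finset.image (α ∘ e) Finset.univ = Finset.image α Finset.univ := by
      rw [← Finset.image_image, Finset.image_univ_equiv]
    have hinj : Function.Injective (α ∘ e) ↔ Function.Injective α :=
      Equiv.injective_comp e α
    by_cases h : Function.Injective α
    · rw [if_pos (hinj.mpr h), if_pos h, himg]
    · rw [if_neg (fun hc => h (hinj.mp hc)), if_neg h]
  -- support
  · intro l _ α hbad
    simp only []
    by_cases hinj : Function.Injective α
    · rw [if_pos hinj]
      push_neg at hbad
      obtain ⟨m, n, hmn, hnadj⟩ := hbad hinj
      have hnc : ¬ G.IsClique ((Finset.image α Finset.univ : Finset (Fin N)) : Set (Fin N)) := by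
        intro hcl
        exact hnadj (hcl (Finset.mem_coe.mpr (Finset.mem_image_of_mem α (Finset.mem_univ m)))
          (Finset.mem_coe.mpr (Finset.mem_image_of_mem α (Finset.mem_univ n)))
          (fun h => hmn (hinj h)))
      rw [hcsupp _ (fun hc => hnc hc.1), zero_div]
    · rw [if_neg hinj]
  -- conditional parameters
  · intro i x
    show Θ i x = ∑ l ∈ Finset.range k, ∑ α : Fin l → Fin N,
      (if Function.Injective (Fin.cons i α : Fin (l + 1) → Fin N)
        then c (Finset.image (Fin.cons i α : Fin (l + 1) → Fin N) Finset.univ)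
          / (Nat.factorial (l + 1 - 1)) else 0) * ∏ j, φ (x (α j))
    have hwcons : ∀ (l : ℕ) (α : Fin l → Fin N),
        (if Function.Injective (Fin.cons i α : Fin (l + 1) → Fin N)
          then c (Finset.image (Fin.cons i α : Fin (l + 1) → Fin N) Finset.univ)
            / (Nat.factorial (l + 1 - 1)) else 0) * ∏ j, φ (x (α j))
        = (if Function.Injective α
            then (if i ∈ Finset.image α Finset.univ then 0
              else c (insert i (Finset.image α Finset.univ)) / (Nat.factorial l)
                * ∏ j ∈ Finset.image α Finset.univ, φ (x j))
            else 0) := by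
      intro l α
      have hl1 : l + 1 - 1 = l := by omega
      by_cases hinj : Function.Injective α
      · by_cases hmem : i ∈ Finset.image α Finset.univ
        · have hnc : ¬ Function.Injective (Fin.cons i α : Fin (l + 1) → Fin N) := by
            rw [Fin.cons_injective_iff]
            rintro ⟨h1, -⟩
            obtain ⟨j, -, hj⟩ := Finset.mem_image.mp hmem
            exact h1 ⟨j, hj⟩
          rw [if_neg hnc, if_pos hinj, if_pos hmem, zero_mul]
        · have hcons : Function.Injective (Fin.cons i α : Fin (l + 1) → Fin N) := by
            rw [Fin.cons_injective_iff]
            refine ⟨?_, hinj⟩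
            rintro ⟨j, hj⟩
            exact hmem (Finset.mem_image.mpr ⟨j, Finset.mem_univ j, hj⟩)
          have hprod : ∏ j ∈ Finset.image α Finset.univ, φ (x j) = ∏ j, φ (x (α j)) :=
            Finset.prod_image (fun m _ n _ h => hinj h)
          rw [if_pos hcons, if_pos hinj, if_neg hmem, image_cons, ← hprod, hl1]
      · have hnc : ¬ Function.Injective (Fin.cons i α : Fin (l + 1) → Fin N) := by
          rw [Fin.cons_injective_iff]
          rintro ⟨-, h2⟩
          exact hinj h2
        rw [if_neg hnc, if_neg hinj, zero_mul]
    have hcount : ∀ l : ℕ, ∑ α : Fin l → Fin N,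
        (if Function.Injective α
          then (if i ∈ Finset.image α Finset.univ then 0
            else c (insert i (Finset.image α Finset.univ)) / (Nat.factorial l)
              * ∏ j ∈ Finset.image α Finset.univ, φ (x j))
          else 0)
        = ∑ U : Finset (Fin N), (if U.card = l ∧ i ∉ U
            then c (insert i U) * ∏ j ∈ U, φ (x j) else 0) := by
      intro l
      rw [count_inj l (fun U => if i ∈ U then 0
        else c (insert i U) / (Nat.factorial l) * ∏ j ∈ U, φ (x j))]
      apply Finset.sum_congr rfl
      intro U _
      by_cases hcard : U.card = l
      · by_cases hiU : i ∈ U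
        · simp [hcard, hiU]
        · rw [if_pos hcard, if_neg hiU, if_pos ⟨hcard, hiU⟩]
          have hf0 : ((l.factorial : ℝ)) ≠ 0 := by exact_mod_cast Nat.factorial_ne_zero l
          field_simp
      · simp [hcard]
    simp_rw [hwcons, hcount]
    rw [Finset.sum_comm]
    have hinner : ∀ U : Finset (Fin N),
        ∑ l ∈ Finset.range k, (if U.card = l ∧ i ∉ U
            then c (insert i U) * ∏ j ∈ U, φ (x j) else 0)
        = (if i ∉ U then c (insert i U) * ∏ j ∈ U, φ (x j) else 0) := by
      intro U
      have h1 : ∀ l, (if U.card = l ∧ i ∉ U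
            then c (insert i U) * ∏ j ∈ U, φ (x j) else 0)
          = (if U.card = l then (if i ∉ U then c (insert i U) * ∏ j ∈ U, φ (x j) else 0)
              else 0) := by
        intro l
        by_cases h1 : U.card = l <;> by_cases h2 : i ∉ U <;>
          simp [h1, h2]
      simp_rw [h1]
      rw [Finset.sum_ite_eq (Finset.range k) U.card]
      by_cases hiU : i ∉ U
      · by_cases hck : U.card ∈ Finset.range k
        · simp [hck]
        · have hkc : k ≤ U.card := by
            simpa [Finset.mem_range, not_lt] using hck
          have hc0 : c (insert i U) = 0 := by
            apply hccard
            rw [Finset.card_insert_of_notMem hiU]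
            omega
          simp [hck, hc0]
      · simp [hiU]
    simp_rw [hinner]
    -- now the analytic identification Θ i x = Qfun c φ i x
    have hQx : ∀ (z : X), Qfun c φ i (Function.update x i z) = Qfun c φ i x :=
      fun z => Qfun_local c φ i _ x (fun j hj => Function.update_of_ne hj z x)
    have hRx : ∀ (z : X), Rfun c K φ B i (Function.update x i z) = Rfun c K φ B i x :=
      fun z => Rfun_local c K φ B i _ x (fun j hj => Function.update_of_ne hj z x)
    have hΘx : ∀ (z : X), Θ i (Function.update x i z) = Θ i x :=
      fun z => hΘlocal i _ x (fun j hj => Function.update_of_ne hj z x)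
    have hgx : ∀ (z : X), g i (Function.update x i z) = g i x :=
      fun z => hglocal i _ x (fun j hj => Function.update_of_ne hj z x)
    have e1 := hA i (Function.update x i a)
    have e2 := hA i (Function.update x i b)
    rw [Function.update_self, hΘx a, hgx a] at e1
    rw [Function.update_self, hΘx b, hgx b] at e2
    have e3 := master_split c K φ B H hmaster i (Function.update x i a)
    have e4 := master_split c K φ B H hmaster i (Function.update x i b)
    rw [Function.update_self, hQx a, hRx a] at e3
    rw [Function.update_self, hQx b, hRx b] at e4
    have p1 : Θ i x * φ a + g i x = φ a * Qfun c φ i x + Rfun c K φ B i x := by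
      linarith [e1, e3]
    have p2 : Θ i x * φ b + g i x = φ b * Qfun c φ i x + Rfun c K φ B i x := by
      linarith [e2, e4]
    have hkey : (Θ i x - Qfun c φ i x) * (φ a - φ b) = 0 := by
      linear_combination p1 - p2
    have hQ : Θ i x = Qfun c φ i x := by
      rcases mul_eq_zero.mp hkey with h | h
      · linarith [sub_eq_zero.mp h]
      · exact absurd (sub_eq_zero.mp h) hab
    rw [hQ]
    rfl
  -- joint distribution
  · refine ⟨-(K + c ∅), ?_⟩
    intro x
    show P x = Real.exp
      ((∑ l ∈ Finset.range k, (1 / ((l : ℝ) + 1)) *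
          ∑ α : Fin (l + 1) → Fin N,
            (if Function.Injective α
              then c (Finset.image α Finset.univ) / (Nat.factorial (l + 1 - 1)) else 0)
              * ∏ j, φ (x (α j)))
        + (∑ i, B (x i)) - -(K + c ∅))
    have hterm : ∀ (l : ℕ) (α : Fin (l + 1) → Fin N),
        (if Function.Injective α
          then c (Finset.image α Finset.univ) / (Nat.factorial (l + 1 - 1)) else 0)
          * ∏ j, φ (x (α j))
        = (if Function.Injective α
            then c (Finset.image α Finset.univ) / (Nat.factorial l)
              * ∏ j ∈ Finset.image α Finset.univ, φ (x j)
            else 0) := by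
      intro l α
      have hl1 : l + 1 - 1 = l := by omega
      by_cases hinj : Function.Injective α
      · have hprod : ∏ j ∈ Finset.image α Finset.univ, φ (x j) = ∏ j, φ (x (α j)) :=
          Finset.prod_image (fun m _ n _ h => hinj h)
        rw [if_pos hinj, if_pos hinj, ← hprod, hl1]
      · rw [if_neg hinj, if_neg hinj, zero_mul]
    have hcnt : ∀ l : ℕ, (1 / ((l : ℝ) + 1)) *
        ∑ α : Fin (l + 1) → Fin N,
          (if Function.Injective α
            then c (Finset.image α Finset.univ) / (Nat.factorial l)
              * ∏ j ∈ Finset.image α Finset.univ, φ (x j)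
            else 0)
        = ∑ U : Finset (Fin N), (if U.card = l + 1
            then c U * ∏ j ∈ U, φ (x j) else 0) := by
      intro l
      rw [count_inj (l + 1) (fun U => c U / (Nat.factorial l) * ∏ j ∈ U, φ (x j))]
      rw [Finset.mul_sum]
      apply Finset.sum_congr rfl
      intro U _
      by_cases hcard : U.card = l + 1
      · rw [if_pos hcard, if_pos hcard]
        have hfac : ((l + 1).factorial : ℝ) = ((l : ℝ) + 1) * (l.factorial : ℝ) := by
          rw [Nat.factorial_succ]; push_cast; ring
        rw [hfac]
        have hl0 : ((l : ℝ) + 1) ≠ 0 := by positivity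
        have hf0 : ((l.factorial : ℝ)) ≠ 0 := by
          exact_mod_cast Nat.factorial_ne_zero l
        field_simp
      · rw [if_neg hcard, if_neg hcard, mul_zero]
    simp_rw [hterm, hcnt]
    rw [Finset.sum_comm]
    have hinner : ∀ U : Finset (Fin N),
        ∑ l ∈ Finset.range k, (if U.card = l + 1 then c U * ∏ j ∈ U, φ (x j) else 0)
        = c U * ∏ j ∈ U, φ (x j) - (if U = ∅ then c U * ∏ j ∈ U, φ (x j) else 0) := by
      intro U
      by_cases h0 : U = ∅
      · subst h0
        simp
      · rw [if_neg h0]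
        have hU1 : 1 ≤ U.card := Finset.card_pos.mpr (Finset.nonempty_of_ne_empty h0)
        obtain ⟨m, hm⟩ : ∃ m, U.card = m + 1 :=
          ⟨U.card - 1, by omega⟩
        have h1 : ∀ l, (if U.card = l + 1 then c U * ∏ j ∈ U, φ (x j) else 0)
            = (if m = l then c U * ∏ j ∈ U, φ (x j) else 0) := by
          intro l
          have : (U.card = l + 1) ↔ (m = l) := by omega
          by_cases h : m = l
          · rw [if_pos h, if_pos (this.mpr h)]
          · rw [if_neg h, if_neg (fun hc => h (this.mp hc))]
        simp_rw [h1]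
        rw [Finset.sum_ite_eq (Finset.range k) m]
        by_cases hmk : m ∈ Finset.range k
        · rw [if_pos hmk, sub_zero]
        · rw [if_neg hmk]
          have : c U = 0 := by
            apply hccard
            rw [Finset.mem_range, not_lt] at hmk
            omega
          rw [this, zero_mul, sub_zero]
    simp_rw [hinner]
    rw [Finset.sum_sub_distrib]
    have hlast : ∑ U : Finset (Fin N), (if U = ∅ then c U * ∏ j ∈ U, φ (x j) else 0)
        = c ∅ := by
      rw [Finset.sum_ite_eq' Finset.univ (∅ : Finset (Fin N))
        (fun U => c U * ∏ j ∈ U, φ (x j))]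
      simp
    rw [hlast]
    have hHx : H x = (∑ U : Finset (Fin N), c U * ∏ j ∈ U, φ (x j)) + (∑ j, B (x j)) + K :=
      hmaster x
    have : (∑ U : Finset (Fin N), c U * ∏ j ∈ U, φ (x j)) - c ∅
        + (∑ i, B (x i)) - -(K + c ∅) = H x := by
      rw [hHx]; ring
    rw [this, hH]
    exact (Real.exp_log (hpos x)).symm

end
end
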